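/- arXiv:2406.00357 — 6 statements merged into one kernel-verified Lean document; each statement's English description precedes it below -/
import Mathlib

section
/- Let G be a simple graph with a proper 3-coloring c, let a and b be two distinct colors, let r₀ be a vertex with c(r₀) = a, and let Y be a set of vertices none of which receives color b under c. Let t' be any vertex and let W = N_Y(N_{N(r₀)}(t')), i.e., the set of neighbors in Y of those neighbors of t' that lie in N(r₀). If c takes at least two distinct values on W, then c(t') ≠ b. -/
/-! If `t'` had color `b`, every common neighbor `x` of `r₀` and `t'` would see both `a` and `b`
and so carry the third color; every neighbor of `x` in `Y` avoids that color and `b`, hence has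
color `a`, and `c` would be constant on `W`. -/

theorem Fin.three_eq_of_ne {a b p q : Fin 3} (hab : a ≠ b) (hpa : p ≠ a) (hpb : p ≠ b)
    (hqp : q ≠ p) (hqb : q ≠ b) : q = a := by
  revert a b p q
  decide

theorem color_eq_of_adj_common_neighbor {V : Type*} {G : SimpleGraph V} {c : V → Fin 3}
    (hc : ∀ u v : V, G.Adj u v → c u ≠ c v) {r t x y : V} (hrt : c r ≠ c t)
    (hrx : G.Adj r x) (htx : G.Adj t x) (hxy : G.Adj x y) (hyt : c y ≠ c t) :
    c y = c r :=
  Fin.three_eq_of_ne hrt (hc r x hrx).symm (hc t x htx).symm (hc x y hxy).symm hyt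

theorem stmt1_general {V : Type*} [Fintype V]
    (G : SimpleGraph V) [DecidableRel G.Adj]
    (c : V → Fin 3) (hc : ∀ u v : V, G.Adj u v → c u ≠ c v)
    (a b : Fin 3) (hab : a ≠ b)
    (r₀ : V) (hr₀ : c r₀ = a)
    (Y : Finset V) (hY : ∀ y ∈ Y, c y ≠ b)
    (t' : V)
    (hmulti : ∃ u ∈ Y.filter (fun y => ∃ x : V, G.Adj r₀ x ∧ G.Adj t' x ∧ G.Adj x y),
              ∃ v ∈ Y.filter (fun y => ∃ x : V, G.Adj r₀ x ∧ G.Adj t' x ∧ G.Adj x y),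
              c u ≠ c v) :
    c t' ≠ b := by
  intro ht
  subst hr₀ ht
  have hW : ∀ y ∈ Y.filter (fun y => ∃ x : V, G.Adj r₀ x ∧ G.Adj t' x ∧ G.Adj x y),
      c y = c r₀ := by
    intro y hy
    obtain ⟨hyY, x, hrx, htx, hxy⟩ := Finset.mem_filter.mp hy
    exact color_eq_of_adj_common_neighbor hc hab hrx htx hxy (hY y hyY)
  obtain ⟨u, hu, v, hv, huv⟩ := hmulti
  exact huv ((hW u hu).trans (hW v hv).symm)

/-- Let `G` be a simple graph with a proper 3-coloring `c`, let `a` and `b`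
be two distinct colors, let `r₀` be a vertex with `c r₀ = a`, and let `Y` be a set of vertices
none of which receives color `b`. Let `t'` be any vertex and let
`W = N_Y(N_{N(r₀)}(t'))`, the set of neighbors in `Y` of those neighbors of `t'` that lie in
`N(r₀)`. If `c` takes at least two distinct values on `W`, then `c t' ≠ b`. -/
theorem stmt1 {V : Type*} [Fintype V] [DecidableEq V]
    (G : SimpleGraph V) [DecidableRel G.Adj]
    (c : V → Fin 3) (hc : ∀ u v : V, G.Adj u v → c u ≠ c v)
    (a b : Fin 3) (hab : a ≠ b)
    (r₀ : V) (hr₀ : c r₀ = a)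
    (Y : Finset V) (hY : ∀ y ∈ Y, c y ≠ b)
    (t' : V)
    (hmulti : ∃ u ∈ Y.filter (fun y => ∃ x : V, G.Adj r₀ x ∧ G.Adj t' x ∧ G.Adj x y),
              ∃ v ∈ Y.filter (fun y => ∃ x : V, G.Adj r₀ x ∧ G.Adj t' x ∧ G.Adj x y),
              c u ≠ c v) :
    c t' ≠ b :=
  stmt1_general G c hc a b hab r₀ hr₀ Y hY t' hmulti
end

section
/- Let G be a simple graph on a finite vertex set V with |V| = n ≥ 4, and let S and T be disjoint nonempty subsets of V such that every vertex of T has at least one neighbor in S. Then there exist nonempty subsets S' ⊆ S and T' ⊆ T and positive reals Δ' and δ' such that: (i) Δ' ≥ ((1/|S|) ∑_{s∈S} d_T(s)) / (30 log₂ n); (ii) δ' ≥ ((1/|T|) ∑_{t∈T} d_S(t)) / 8; (iii) every s ∈ S' satisfies d_{T'}(s) ≥ Δ'; and (iv) every t ∈ T' satisfies δ' ≤ d_{S'}(t) ≤ 5δ'. -/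
/-!
Let `e` be the number of edges between `S` and `T`. The vertices of `T` whose degree is at
least half the average carry at least half of the edges; splitting them into the
`⌊log₂ n⌋ + 1` dyadic degree classes `[2^j, 2^(j+1))` and keeping the heaviest class `T₁`
loses another factor `⌊log₂ n⌋ + 1`, so `e(S, T₁) ≥ e / (2 (log₂ n + 1))`. Put `δ = 2^j / 2`
and `Δ = e(S, T₁) / (5|S|)`, and choose `S' ⊆ S`, `T' ⊆ T₁` maximising
`e(S', T') - Δ|S'| - δ|T'|`. Maximality gives the minimum degrees `Δ` and `δ`, while the value
at `(S, T₁)` is at least `e(S, T₁) (1 - 1/5 - 1/2) > 0`, so `(S', T')` is nonempty. The upper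
bound `d_{S'}(t) < 2^(j+1) = 4δ` is inherited from the dyadic class.
-/

open Finset

section Potential

variable {α β : Type*} (r : α → β → Prop)
  [∀ a b, Decidable (r a b)] (x y : ℝ)

noncomputable def edgeExcess (s : Finset α) (t : Finset β) : ℝ :=
  ∑ a ∈ s, (#(t.bipartiteAbove r a) : ℝ) - x * #s - y * #t

variable {r x y}

lemma edgeExcess_erase_left [DecidableEq α] {s : Finset α} {a : α} (t : Finset β) (ha : a ∈ s) :
    edgeExcess r x y (s.erase a) t = edgeExcess r x y s t + x - #(t.bipartiteAbove r a) := by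
  unfold edgeExcess
  rw [← sum_erase_add _ _ ha, cast_card_erase_of_mem ha]
  ring

lemma edgeExcess_erase_right [DecidableEq β] (s : Finset α) {t : Finset β} {b : β} (hb : b ∈ t) :
    edgeExcess r x y s (t.erase b) = edgeExcess r x y s t + y - #(s.bipartiteBelow r b) := by
  have hcount : ∑ a ∈ s, #((t.erase b).bipartiteAbove r a) + #(s.bipartiteBelow r b) =
      ∑ a ∈ s, #(t.bipartiteAbove r a) := by
    rw [sum_card_bipartiteAbove_eq_sum_card_bipartiteBelow,
      sum_card_bipartiteAbove_eq_sum_card_bipartiteBelow, sum_erase_add _ _ hb]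
  unfold edgeExcess
  rw [← Nat.cast_sum, ← Nat.cast_sum, ← hcount, cast_card_erase_of_mem hb]
  push_cast
  ring

variable (r x y)

theorem exists_minDegree_subpair [DecidableEq α] [DecidableEq β] (s : Finset α) (t : Finset β) :
    ∃ s' ⊆ s, ∃ t' ⊆ t, edgeExcess r x y s t ≤ edgeExcess r x y s' t' ∧
      (∀ a ∈ s', x ≤ #(t'.bipartiteAbove r a)) ∧ ∀ b ∈ t', y ≤ #(s'.bipartiteBelow r b) := by
  obtain ⟨⟨s', t'⟩, hmem, hmax⟩ := exists_max_image (s.powerset ×ˢ t.powerset)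
    (fun p => edgeExcess r x y p.1 p.2) ⟨(s, t), by simp⟩
  simp only [mem_product, mem_powerset, Prod.forall, and_imp] at hmem hmax
  refine ⟨s', hmem.1, t', hmem.2, hmax s t subset_rfl subset_rfl, fun a ha => ?_, fun b hb => ?_⟩
  · have := hmax (s'.erase a) t' ((erase_subset _ _).trans hmem.1) hmem.2
    rw [edgeExcess_erase_left t' ha] at this
    linarith
  · have := hmax s' (t'.erase b) hmem.1 ((erase_subset _ _).trans hmem.2)
    rw [edgeExcess_erase_right s' hb] at this
    linarith

lemma bipartiteBelow_subset_bipartiteBelow {s s' : Finset α} (h : s' ⊆ s) (b : β) :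
    s'.bipartiteBelow r b ⊆ s.bipartiteBelow r b :=
  filter_subset_filter _ h

variable {r} in
theorem exists_regular_subpair [DecidableEq α] [DecidableEq β] {s : Finset α} {t : Finset β}
    (ht : t.Nonempty) {k : ℕ}
    (hdeg : ∀ b ∈ t, 2 ^ k ≤ #(s.bipartiteBelow r b) ∧ #(s.bipartiteBelow r b) < 2 ^ (k + 1)) :
    ∃ s' ⊆ s, ∃ t' ⊆ t, s'.Nonempty ∧ t'.Nonempty ∧
      (∀ a ∈ s', (∑ b ∈ t, (#(s.bipartiteBelow r b) : ℝ)) / (5 * #s) ≤ #(t'.bipartiteAbove r a)) ∧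
      ∀ b ∈ t', (2 ^ k / 2 : ℝ) ≤ #(s'.bipartiteBelow r b) ∧
        (#(s'.bipartiteBelow r b) : ℝ) < 4 * (2 ^ k / 2) := by
  have hδ : (0 : ℝ) < 2 ^ k / 2 := by positivity
  replace hdeg : ∀ b ∈ t, 2 * (2 ^ k / 2 : ℝ) ≤ #(s.bipartiteBelow r b) ∧
      (#(s.bipartiteBelow r b) : ℝ) < 4 * (2 ^ k / 2) := fun b hb => by
    have h₁ := (Nat.cast_le (α := ℝ)).2 (hdeg b hb).1
    have h₂ := (Nat.cast_lt (α := ℝ)).2 (hdeg b hb).2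
    push_cast [pow_succ] at h₁ h₂
    constructor <;> linarith
  generalize (2 ^ k / 2 : ℝ) = δ at hδ hdeg ⊢
  set e := ∑ b ∈ t, (#(s.bipartiteBelow r b) : ℝ)
  have hsum : ∑ a ∈ s, (#(t.bipartiteAbove r a) : ℝ) = e := by
    rw [← Nat.cast_sum, sum_card_bipartiteAbove_eq_sum_card_bipartiteBelow, Nat.cast_sum]
  have hte : #t * (2 * δ) ≤ e := by
    simpa using card_nsmul_le_sum t _ _ fun b hb => (hdeg b hb).1
  clear_value e
  have he : 0 < e := lt_of_lt_of_le (mul_pos (by exact_mod_cast ht.card_pos) (by positivity)) hte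
  have hs : s.Nonempty := by
    obtain ⟨b, hb⟩ := ht
    have : (0 : ℝ) < #(s.bipartiteBelow r b) := by linarith [(hdeg b hb).1]
    exact (card_pos.1 (by exact_mod_cast this)).mono (filter_subset _ _)
  obtain ⟨s', hs', t', ht', hexcess, hleft, hright⟩ :=
    exists_minDegree_subpair r (e / (5 * #s)) δ s t
  have hpos : 0 < ∑ a ∈ s', (#(t'.bipartiteAbove r a) : ℝ) := by
    have hcard : (#s : ℝ) ≠ 0 := by exact_mod_cast hs.card_pos.ne'
    have hx : e / (5 * #s) * #s = e / 5 := by field_simp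
    have hx' : 0 ≤ e / (5 * #s) * #s' := by positivity
    have hy' : 0 ≤ δ * #t' := by positivity
    rw [edgeExcess, edgeExcess, hsum, hx] at hexcess
    linarith
  obtain ⟨a, ha, hne⟩ := exists_ne_zero_of_sum_ne_zero hpos.ne'
  refine ⟨s', hs', t', ht', ⟨a, ha⟩, ?_, hleft, fun b hb => ⟨hright b hb, ?_⟩⟩
  · exact (card_ne_zero.1 (by exact_mod_cast hne)).mono (filter_subset _ _)
  · refine lt_of_le_of_lt ?_ (hdeg b (ht' hb)).2
    exact_mod_cast card_le_card (bipartiteBelow_subset_bipartiteBelow r hs' b)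

end Potential

section Dyadic

variable {ι : Type*}

theorem sum_le_two_mul_sum_filter_heavy (s : Finset ι) (f : ι → ℕ) :
    ∑ i ∈ s, f i ≤ 2 * ∑ i ∈ s with ∑ j ∈ s, f j ≤ 2 * #s * f i, f i := by
  set E := ∑ j ∈ s, f j
  rcases s.eq_empty_or_nonempty with rfl | hs
  · simp [E]
  have hlight : #s * (2 * ∑ i ∈ s with ¬E ≤ 2 * #s * f i, f i) ≤ #s * E :=
    calc #s * (2 * ∑ i ∈ s with ¬E ≤ 2 * #s * f i, f i)
        = ∑ i ∈ s with ¬E ≤ 2 * #s * f i, 2 * #s * f i := by rw [mul_sum, mul_sum]; ring_nf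
      _ ≤ ∑ i ∈ s with ¬E ≤ 2 * #s * f i, E :=
          sum_le_sum fun i hi => (not_le.1 (mem_filter.1 hi).2).le
      _ ≤ #s * E := by rw [sum_const, smul_eq_mul]; gcongr; exact filter_subset _ _
  have := sum_filter_add_sum_filter_not s (fun i => E ≤ 2 * #s * f i) f
  have := Nat.le_of_mul_le_mul_left hlight hs.card_pos
  omega

theorem exists_sum_le_mul_sum_filter_log_eq (s : Finset ι) (f : ι → ℕ) (b n : ℕ)
    (hf : ∀ i ∈ s, f i ≤ n) :
    ∃ k, ∑ i ∈ s, f i ≤ (Nat.log b n + 1) * ∑ i ∈ s with Nat.log b (f i) = k, f i := by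
  have hmaps : ∀ i ∈ s, Nat.log b (f i) ∈ range (Nat.log b n + 1) := fun i hi =>
    mem_range.2 (Nat.lt_succ_of_le (Nat.log_mono_right (hf i hi)))
  obtain ⟨k, -, hk⟩ := exists_max_image (range (Nat.log b n + 1))
    (fun k => ∑ i ∈ s with Nat.log b (f i) = k, f i) nonempty_range_add_one
  refine ⟨k, ?_⟩
  calc ∑ i ∈ s, f i = ∑ k ∈ range (Nat.log b n + 1), ∑ i ∈ s with Nat.log b (f i) = k, f i :=
        (sum_fiberwise_of_maps_to hmaps f).symm
    _ ≤ #(range (Nat.log b n + 1)) • ∑ i ∈ s with Nat.log b (f i) = k, f i :=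
        sum_le_card_nsmul _ _ _ hk
    _ = _ := by rw [card_range, smul_eq_mul]

theorem exists_dyadic_heavy_subset {s : Finset ι} (hs : s.Nonempty) {f : ι → ℕ} {n : ℕ}
    (hpos : ∀ i ∈ s, 0 < f i) (hle : ∀ i ∈ s, f i ≤ n) :
    ∃ k, ∃ s' ⊆ s, s'.Nonempty ∧ (∀ i ∈ s', 2 ^ k ≤ f i ∧ f i < 2 ^ (k + 1)) ∧
      ∑ i ∈ s, f i ≤ 2 * (Nat.log 2 n + 1) * ∑ i ∈ s', f i ∧
      ∑ i ∈ s, f i < 2 * #s * 2 ^ (k + 1) := by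
  set E := ∑ i ∈ s, f i
  set heavy := s.filter fun i => E ≤ 2 * #s * f i
  obtain ⟨k, hk⟩ := exists_sum_le_mul_sum_filter_log_eq heavy f 2 n
    fun i hi => hle i (filter_subset _ _ hi)
  set s' := heavy.filter fun i => Nat.log 2 (f i) = k
  have hs's : s' ⊆ s := (filter_subset _ _).trans (filter_subset _ _)
  have hE : E ≤ 2 * (Nat.log 2 n + 1) * ∑ i ∈ s', f i := by
    have hheavy : E ≤ 2 * ∑ i ∈ heavy, f i := sum_le_two_mul_sum_filter_heavy s f
    rw [mul_assoc]
    omega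
  have hEpos : 0 < E := sum_pos hpos hs
  obtain ⟨i, hi⟩ : s'.Nonempty := nonempty_of_sum_ne_zero fun h => by rw [h, mul_zero] at hE; omega
  have hdyadic : ∀ i ∈ s', 2 ^ k ≤ f i ∧ f i < 2 ^ (k + 1) := fun i hi => by
    obtain ⟨-, rfl⟩ := mem_filter.1 hi
    exact ⟨Nat.pow_log_le_self 2 (hpos i (hs's hi)).ne', Nat.lt_pow_succ_log_self one_lt_two _⟩
  refine ⟨k, s', hs's, ⟨i, hi⟩, hdyadic, hE, ?_⟩
  calc E ≤ 2 * #s * f i := (mem_filter.1 (mem_filter.1 hi).1).2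
    _ < 2 * #s * 2 ^ (k + 1) := Nat.mul_lt_mul_of_pos_left (hdyadic i hi).2 (by positivity)

end Dyadic

namespace SimpleGraph

variable {V : Type*} (G : SimpleGraph V) [DecidableRel G.Adj]

lemma bipartiteBelow_adj (s : Finset V) (v : V) :
    s.bipartiteBelow G.Adj v = {w ∈ s | G.Adj v w} :=
  filter_congr fun w _ => G.adj_comm w v

lemma sum_card_filter_adj_comm (s t : Finset V) :
    ∑ v ∈ s, #{w ∈ t | G.Adj v w} = ∑ w ∈ t, #{v ∈ s | G.Adj w v} := by
  rw [← sum_congr rfl fun w _ => congrArg card (G.bipartiteBelow_adj s w)]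
  exact sum_card_bipartiteAbove_eq_sum_card_bipartiteBelow G.Adj

end SimpleGraph

lemma div_div_mul_logb_le {n : ℕ} (hn : 2 ≤ n) {a b c : ℝ} (hb : 0 < b) (hc : 0 < c)
    (h : a ≤ 2 * (Nat.log 2 n + 1) * b) : a / c / (30 * Real.logb 2 n) ≤ b / (5 * c) := by
  have hlog : (1 : ℝ) ≤ Nat.log 2 n := by exact_mod_cast Nat.log_pos one_lt_two hn
  have hlogb := Real.natLog_le_logb n 2
  push_cast at hlogb
  have hlogpos : 0 < Real.logb 2 n := by linarith
  have ha : a ≤ 4 * Real.logb 2 n * b := by nlinarith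
  rw [div_div, div_le_div_iff₀ (by positivity) (by positivity)]
  nlinarith [mul_le_mul_of_nonneg_right ha hc.le, mul_pos (mul_pos hlogpos hb) hc]

theorem stmt4_general {V : Type*} [Fintype V] [DecidableEq V]
    (G : SimpleGraph V) [DecidableRel G.Adj]
    (hn : 4 ≤ Fintype.card V)
    (S T : Finset V) (hS : S.Nonempty) (hT : T.Nonempty)
    (hTS : ∀ t ∈ T, ∃ s ∈ S, G.Adj t s) :
    ∃ (S' T' : Finset V) (Δ' δ' : ℝ),
      S' ⊆ S ∧ T' ⊆ T ∧ S'.Nonempty ∧ T'.Nonempty ∧ 0 < Δ' ∧ 0 < δ' ∧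
      Δ' ≥ ((∑ s ∈ S, ((T.filter (fun t => G.Adj s t)).card : ℝ)) / S.card) /
            (30 * Real.logb 2 (Fintype.card V)) ∧
      δ' ≥ ((∑ t ∈ T, ((S.filter (fun s => G.Adj t s)).card : ℝ)) / T.card) / 8 ∧
      (∀ s ∈ S', Δ' ≤ ((T'.filter (fun t => G.Adj s t)).card : ℝ)) ∧
      (∀ t ∈ T', δ' ≤ ((S'.filter (fun s => G.Adj t s)).card : ℝ) ∧
                 ((S'.filter (fun s => G.Adj t s)).card : ℝ) ≤ 5 * δ') := by
  set n := Fintype.card V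
  set d : V → ℕ := fun t => #{s ∈ S | G.Adj t s}
  have hpos : ∀ t ∈ T, 0 < d t := fun t ht => by
    obtain ⟨s, hs, hadj⟩ := hTS t ht
    exact card_pos.2 ⟨s, mem_filter.2 ⟨hs, hadj⟩⟩
  have hle : ∀ t ∈ T, d t ≤ n := fun t _ => (card_filter_le _ _).trans (card_le_univ _)
  obtain ⟨j, T₁, hT₁, hT₁ne, hdyadic, hlog, havg⟩ := exists_dyadic_heavy_subset hT hpos hle
  obtain ⟨S', hS', T', hT', hS'ne, hT'ne, hleft, hright⟩ :=
    exists_regular_subpair (r := G.Adj) hT₁ne fun t ht => by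
      simpa only [G.bipartiteBelow_adj] using hdyadic t ht
  simp only [G.bipartiteBelow_adj] at hleft hright
  have hE₁ : (0 : ℝ) < ∑ t ∈ T₁, (d t : ℝ) := by
    exact_mod_cast sum_pos (fun t ht => hpos t (hT₁ ht)) hT₁ne
  have hδ : (0 : ℝ) < 2 ^ j / 2 := by positivity
  refine ⟨S', T', _, 2 ^ j / 2, hS', hT'.trans hT₁, hS'ne, hT'ne,
    div_pos hE₁ (by simpa using hS.card_pos), hδ, ?_, ?_, hleft,
    fun t ht => ⟨(hright t ht).1, (hright t ht).2.le.trans (by linarith)⟩⟩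
  · have hsum : ∑ s ∈ S, (#{t ∈ T | G.Adj s t} : ℝ) = ∑ t ∈ T, (d t : ℝ) := by
      exact_mod_cast G.sum_card_filter_adj_comm S T
    rw [hsum, ge_iff_le]
    exact div_div_mul_logb_le (by omega) hE₁ (by simpa using hS.card_pos) (by exact_mod_cast hlog)
  · have havg' : (∑ t ∈ T, (d t : ℝ)) < 2 * #T * (2 ^ j * 2) := by exact_mod_cast havg
    have hT₀ : (0 : ℝ) < #T := by exact_mod_cast hT.card_pos
    rw [ge_iff_le, div_div, div_le_iff₀ (by positivity)]
    linarith

/-- regularization. Let `G` be a simple graph on a finite vertex set `V` with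
`|V| = n ≥ 4`, and let `S` and `T` be disjoint nonempty subsets of `V` such that every vertex
of `T` has at least one neighbor in `S`. Then there exist nonempty subsets `S' ⊆ S` and
`T' ⊆ T` and positive reals `Δ'` and `δ'` such that:
(i) `Δ' ≥ ((1/|S|) ∑_{s∈S} d_T(s)) / (30 log₂ n)`;
(ii) `δ' ≥ ((1/|T|) ∑_{t∈T} d_S(t)) / 8`;
(iii) every `s ∈ S'` satisfies `d_{T'}(s) ≥ Δ'`; and
(iv) every `t ∈ T'` satisfies `δ' ≤ d_{S'}(t) ≤ 5δ'`. -/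
theorem stmt4 {V : Type*} [Fintype V] [DecidableEq V]
    (G : SimpleGraph V) [DecidableRel G.Adj]
    (hn : 4 ≤ Fintype.card V)
    (S T : Finset V) (hdisj : Disjoint S T) (hS : S.Nonempty) (hT : T.Nonempty)
    (hTS : ∀ t ∈ T, ∃ s ∈ S, G.Adj t s) :
    ∃ (S' T' : Finset V) (Δ' δ' : ℝ),
      S' ⊆ S ∧ T' ⊆ T ∧ S'.Nonempty ∧ T'.Nonempty ∧ 0 < Δ' ∧ 0 < δ' ∧
      Δ' ≥ ((∑ s ∈ S, ((T.filter (fun t => G.Adj s t)).card : ℝ)) / S.card) /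
            (30 * Real.logb 2 (Fintype.card V)) ∧
      δ' ≥ ((∑ t ∈ T, ((S.filter (fun s => G.Adj t s)).card : ℝ)) / T.card) / 8 ∧
      (∀ s ∈ S', Δ' ≤ ((T'.filter (fun t => G.Adj s t)).card : ℝ)) ∧
      (∀ t ∈ T', δ' ≤ ((S'.filter (fun s => G.Adj t s)).card : ℝ) ∧
                 ((S'.filter (fun s => G.Adj t s)).card : ℝ) ≤ 5 * δ') :=
  stmt4_general G hn S T hS hT hTS
end

section
/- Let n ≥ 2 be a natural number, let T be a finite nonempty set, and let f : T → ℕ satisfy 1 ≤ f(t) ≤ n for all t ∈ T. For each natural number ℓ let U_ℓ = {t ∈ T : (4/3)^ℓ ≤ f(t) < (4/3)^{ℓ+1}}. Then there exists ℓ such that (4/3)^ℓ ≥ (∑_{t∈T} f(t)) / (2|T|) and ∑_{t∈U_ℓ} f(t) ≥ (∑_{t∈T} f(t)) / (12 log₂ n). -/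
open Finset Real

/-!
Put `t` in bucket `⌊log_{4/3} f(t)⌋`, so there are at most `⌊log_{4/3} n⌋ + 1 ≤ 4 log₂ n` buckets.
An element whose bucket lies below half the average `S / |T|` has `f(t) < (4/3) · S / (2|T|)`,
so all such elements together weigh at most `2S/3`. The remaining buckets therefore carry at
least `S/3`, and one of them carries at least `S / (3 · #buckets) ≥ S / (12 log₂ n)`.
-/

section Buckets

variable {b : ℝ}

theorem pow_le_and_lt_pow_succ_iff_floor_logb_eq (hb : 1 < b) {x : ℝ} (hx : 1 ≤ x) (ℓ : ℕ) :
    b ^ ℓ ≤ x ∧ x < b ^ (ℓ + 1) ↔ ⌊logb b x⌋₊ = ℓ := by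
  have hx₀ : 0 < x := by linarith
  rw [Nat.floor_eq_iff (logb_nonneg hb hx), le_logb_iff_rpow_le hb hx₀,
    logb_lt_iff_lt_rpow hb hx₀, ← Nat.cast_succ, rpow_natCast, rpow_natCast]

theorem lt_pow_floor_logb_succ (hb : 1 < b) {x : ℝ} (hx : 1 ≤ x) :
    x < b ^ (⌊logb b x⌋₊ + 1) :=
  ((pow_le_and_lt_pow_succ_iff_floor_logb_eq hb hx _).2 rfl).2

variable {α : Type*}

theorem sum_filter_pow_floor_logb_lt_le (hb : 1 < b) (T : Finset α) (w : α → ℝ)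
    (hw : ∀ t ∈ T, 1 ≤ w t) {a : ℝ} (ha : 0 ≤ a) :
    ∑ t ∈ T with b ^ ⌊logb b (w t)⌋₊ < a, w t ≤ #T * (b * a) := by
  set light := T.filter fun t => b ^ ⌊logb b (w t)⌋₊ < a
  have hlight : ∀ t ∈ light, w t ≤ b * a := by
    intro t ht
    obtain ⟨htT, hlow⟩ := mem_filter.1 ht
    calc w t ≤ b ^ (⌊logb b (w t)⌋₊ + 1) := (lt_pow_floor_logb_succ hb (hw t htT)).le
      _ = b * b ^ ⌊logb b (w t)⌋₊ := pow_succ' _ _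
      _ ≤ b * a := by gcongr
  calc ∑ t ∈ light, w t ≤ #light • (b * a) := sum_le_card_nsmul _ _ _ hlight
    _ ≤ #T * (b * a) := by
      rw [nsmul_eq_mul]
      exact mul_le_mul_of_nonneg_right (mod_cast card_filter_le _ _) (by positivity)

theorem exists_heavy_bucket (hb : 1 < b) (hb₂ : b < 2) (x : ℝ) (T : Finset α) (hT : T.Nonempty)
    (w : α → ℝ) (hw : ∀ t ∈ T, 1 ≤ w t ∧ w t ≤ x) :
    ∃ ℓ : ℕ, (∑ t ∈ T, w t) / (2 * #T) ≤ b ^ ℓ ∧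
      (1 - b / 2) * ∑ t ∈ T, w t ≤
        (⌊logb b x⌋₊ + 1) * ∑ t ∈ T with b ^ ℓ ≤ w t ∧ w t < b ^ (ℓ + 1), w t := by
  set S := ∑ t ∈ T, w t
  set a := S / (2 * #T) with ha
  set M := ⌊logb b x⌋₊ + 1
  have hS : 0 < S := sum_pos (fun t ht => by linarith [hw t ht]) hT
  have hN : (0 : ℝ) < #T := mod_cast hT.card_pos
  have hM : (0 : ℝ) < M := mod_cast Nat.succ_pos _
  have hc : 0 < 1 - b / 2 := by linarith
  set heavy := T.filter fun t => a ≤ b ^ ⌊logb b (w t)⌋₊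
  have hheavy : (1 - b / 2) * S ≤ ∑ t ∈ heavy, w t := by
    have hsplit := sum_filter_add_sum_filter_not T (fun t => a ≤ b ^ ⌊logb b (w t)⌋₊) w
    have hlight := sum_filter_pow_floor_logb_lt_le hb T w (fun t ht => (hw t ht).1)
      (a := a) (by positivity)
    simp only [not_le] at hsplit
    have hmass : #T * (b * a) = b / 2 * S := by rw [ha]; field_simp
    linarith
  have hmaps : ∀ t ∈ heavy, ⌊logb b (w t)⌋₊ ∈ range M := by
    intro t ht
    obtain ⟨h1, h2⟩ := hw t (mem_filter.1 ht).1
    rw [mem_range, Nat.lt_succ_iff]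
    exact Nat.floor_le_floor (logb_le_logb_of_le hb (by linarith) h2)
  obtain ⟨ℓ, -, hℓ⟩ := exists_le_sum_fiber_of_maps_to_of_nsmul_le_sum (w := w) hmaps
    nonempty_range_add_one (b := (1 - b / 2) * S / M)
    (by rwa [card_range, nsmul_eq_mul, mul_div_cancel₀ _ hM.ne'])
  obtain ⟨t, ht⟩ : (heavy.filter fun t => ⌊logb b (w t)⌋₊ = ℓ).Nonempty := by
    rw [nonempty_iff_ne_empty]
    intro h
    rw [h, sum_empty] at hℓ
    linarith [show 0 < (1 - b / 2) * S / M by positivity]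
  obtain ⟨htheavy, htℓ⟩ := mem_filter.1 ht
  refine ⟨ℓ, htℓ ▸ (mem_filter.1 htheavy).2, ?_⟩
  rw [filter_congr (fun t ht => pow_le_and_lt_pow_succ_iff_floor_logb_eq hb (hw t ht).1 ℓ),
    ← Nat.cast_add_one]
  calc (1 - b / 2) * S = M * ((1 - b / 2) * S / M) := (mul_div_cancel₀ _ hM.ne').symm
    _ ≤ M * ∑ t ∈ heavy with ⌊logb b (w t)⌋₊ = ℓ, w t := by gcongr
    _ ≤ M * ∑ t ∈ T with ⌊logb b (w t)⌋₊ = ℓ, w t := by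
      gcongr
      · exact fun t ht _ => by linarith [hw t (mem_filter.1 ht).1]
      · exact filter_subset _ _

end Buckets

theorem logb_four_thirds_le {x : ℝ} (hx : 1 ≤ x) : logb (4 / 3) x ≤ 5 / 2 * logb 2 x := by
  have hlog : log 2 ≤ 5 / 2 * log (4 / 3) := by
    have h : log (2 ^ 2) ≤ log ((4 / 3) ^ 5) := log_le_log (by norm_num) (by norm_num)
    rw [log_pow, log_pow] at h
    push_cast at h
    linarith
  have hlog2 : 0 < log 2 := log_pos one_lt_two
  calc logb (4 / 3) x = log x / log (4 / 3) := rfl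
    _ ≤ log x / (2 / 5 * log 2) := by
      gcongr
      · exact log_nonneg hx
      · linarith
    _ = 5 / 2 * logb 2 x := by rw [logb]; field_simp

theorem three_mul_floor_logb_four_thirds_add_one_le {x : ℝ} (hx : 2 ≤ x) :
    3 * (⌊logb (4 / 3) x⌋₊ + 1 : ℝ) ≤ 12 * logb 2 x := by
  have hx₁ : 1 ≤ x := by linarith
  have hfloor := Nat.floor_le (logb_nonneg (b := 4 / 3) (by norm_num) hx₁)
  have hL : 1 ≤ logb 2 x := by
    rwa [le_logb_iff_rpow_le one_lt_two (by linarith), rpow_one]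
  linarith [logb_four_thirds_le hx₁]

theorem stmt5_general {α : Type*} (n : ℕ) (hn : 2 ≤ n)
    (T : Finset α) (hT : T.Nonempty) (f : α → ℕ)
    (hf : ∀ t ∈ T, 1 ≤ f t ∧ f t ≤ n) :
    ∃ ℓ : ℕ,
      ((4 / 3 : ℝ)) ^ ℓ ≥ (∑ t ∈ T, (f t : ℝ)) / (2 * T.card) ∧
      (∑ t ∈ T.filter
          (fun t => (4 / 3 : ℝ) ^ ℓ ≤ (f t : ℝ) ∧ (f t : ℝ) < (4 / 3 : ℝ) ^ (ℓ + 1)),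
          (f t : ℝ))
        ≥ (∑ t ∈ T, (f t : ℝ)) / (12 * Real.logb 2 n) := by
  obtain ⟨ℓ, hlow, hheavy⟩ := exists_heavy_bucket (b := 4 / 3) (by norm_num) (by norm_num) (n : ℝ)
    T hT (fun t => (f t : ℝ)) fun t ht => ⟨mod_cast (hf t ht).1, mod_cast (hf t ht).2⟩
  refine ⟨ℓ, hlow, ?_⟩
  have hcount := three_mul_floor_logb_four_thirds_add_one_le (x := n) (mod_cast hn)
  have hbucket_nonneg : 0 ≤ ∑ t ∈ T with (4 / 3 : ℝ) ^ ℓ ≤ f t ∧ (f t : ℝ) < (4 / 3) ^ (ℓ + 1),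
      (f t : ℝ) := sum_nonneg fun _ _ => Nat.cast_nonneg _
  rw [ge_iff_le, div_le_iff₀ (by linarith)]
  linarith [mul_le_mul_of_nonneg_right hcount hbucket_nonneg]

/-- bucketing pigeonhole. Let `n ≥ 2`, let `T` be a finite nonempty set, and
let `f : T → ℕ` satisfy `1 ≤ f t ≤ n` for all `t ∈ T`. For each `ℓ` let
`U_ℓ = {t ∈ T : (4/3)^ℓ ≤ f t < (4/3)^{ℓ+1}}`. Then there exists `ℓ` such that
`(4/3)^ℓ ≥ (∑_{t∈T} f t) / (2|T|)` and `∑_{t∈U_ℓ} f t ≥ (∑_{t∈T} f t) / (12 log₂ n)`. -/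
theorem stmt5 {α : Type*} [DecidableEq α] (n : ℕ) (hn : 2 ≤ n)
    (T : Finset α) (hT : T.Nonempty) (f : α → ℕ)
    (hf : ∀ t ∈ T, 1 ≤ f t ∧ f t ≤ n) :
    ∃ ℓ : ℕ,
      ((4 / 3 : ℝ)) ^ ℓ ≥ (∑ t ∈ T, (f t : ℝ)) / (2 * T.card) ∧
      (∑ t ∈ T.filter
          (fun t => (4 / 3 : ℝ) ^ ℓ ≤ (f t : ℝ) ∧ (f t : ℝ) < (4 / 3 : ℝ) ^ (ℓ + 1)),
          (f t : ℝ))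
        ≥ (∑ t ∈ T, (f t : ℝ)) / (12 * Real.logb 2 n) :=
  stmt5_general n hn T hT f hf
end

section
/- Let G be a simple graph, let S and T be disjoint finite vertex sets, let X ⊆ S and Y ⊆ T, and let δ > 0 be a real number. Suppose every y ∈ Y satisfies d_S(y) ≥ δ, and suppose e(X,Y) < δ|Y|/2. Let Y'' = {y ∈ Y : d_{S∖X}(y) ≥ δ/3}. Then e(Y'', S∖X) ≥ δ|Y|/6. -/
/-!
Summing degrees over `Y`, more than `δ|Y|/2` of the edges from `Y` to `S` avoid `X`, so they go
to `S ∖ X`. A vertex of `Y ∖ Y''` sends fewer than `δ/3` of them, so at most `δ|Y|/3` are lost when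
restricting to `Y''`, leaving at least `δ|Y|/6`.
-/

open Finset

theorem card_filter_product_eq_sum {α β : Type*} (r : α → β → Prop) [∀ a b, Decidable (r a b)]
    (s : Finset α) (t : Finset β) :
    #{p ∈ s ×ˢ t | r p.1 p.2} = ∑ a ∈ s, #{b ∈ t | r a b} := by
  simp only [card_filter, sum_product]

theorem card_filter_product_eq_sum_right {α β : Type*} (r : α → β → Prop)
    [∀ a b, Decidable (r a b)] (s : Finset α) (t : Finset β) :
    #{p ∈ s ×ˢ t | r p.1 p.2} = ∑ b ∈ t, #{a ∈ s | r a b} := by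
  simp only [card_filter, sum_product_right]

theorem card_filter_sdiff_add_card_filter {α : Type*} [DecidableEq α] (p : α → Prop)
    [DecidablePred p] {s t : Finset α} (h : t ⊆ s) :
    #{a ∈ s \ t | p a} + #{a ∈ t | p a} = #{a ∈ s | p a} := by
  simp only [card_filter]
  exact sum_sdiff h

theorem sum_sub_card_nsmul_le_sum_filter_le {ι R : Type*} [AddCommGroup R] [LinearOrder R]
    [IsOrderedAddMonoid R] (s : Finset ι) (f : ι → R) {c : R} (hc : 0 ≤ c) :
    ∑ i ∈ s, f i - #s • c ≤ ∑ i ∈ s with c ≤ f i, f i := by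
  have hsmall : ∑ i ∈ s with ¬c ≤ f i, f i ≤ #s • c :=
    calc ∑ i ∈ s with ¬c ≤ f i, f i
        ≤ #{i ∈ s | ¬c ≤ f i} • c := sum_le_card_nsmul _ _ _ fun i hi =>
          (not_le.1 (mem_filter.1 hi).2).le
      _ ≤ #s • c := nsmul_le_nsmul_left hc (card_filter_le _ _)
  rw [← sum_filter_add_sum_filter_not s (fun i => c ≤ f i)]
  exact sub_le_iff_le_add.2 (add_le_add_right hsmall _)

theorem stmt6_general {V : Type*} [DecidableEq V]
    (G : SimpleGraph V) [DecidableRel G.Adj]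
    (S : Finset V)
    (X Y : Finset V) (hX : X ⊆ S)
    (δ : ℝ) (hδ : 0 < δ)
    (hdeg : ∀ y ∈ Y, δ ≤ ((S.filter (fun s => G.Adj y s)).card : ℝ))
    (hsparse : (((X ×ˢ Y).filter (fun p => G.Adj p.1 p.2)).card : ℝ) < δ * Y.card / 2) :
    δ * Y.card / 6 ≤
      ((((Y.filter (fun y => δ / 3 ≤ (((S \ X).filter (fun s => G.Adj y s)).card : ℝ)))
            ×ˢ (S \ X)).filter (fun p => G.Adj p.1 p.2)).card : ℝ) := by
  set d : V → ℝ := fun y => (#{s ∈ S \ X | G.Adj y s} : ℝ)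
  have hd : δ * #Y / 2 < ∑ y ∈ Y, d y := by
    have hsplit : ∑ y ∈ Y, (#{s ∈ S | G.Adj y s} : ℝ) =
        ∑ y ∈ Y, d y + #{p ∈ X ×ˢ Y | G.Adj p.1 p.2} := by
      rw [card_filter_product_eq_sum_right, Nat.cast_sum, ← sum_add_distrib]
      refine sum_congr rfl fun y _ => ?_
      simp only [d, G.adj_comm _ y]
      exact_mod_cast (card_filter_sdiff_add_card_filter _ hX).symm
    have hdeg_sum : #Y • δ ≤ ∑ y ∈ Y, (#{s ∈ S | G.Adj y s} : ℝ) := card_nsmul_le_sum _ _ _ hdeg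
    rw [nsmul_eq_mul] at hdeg_sum
    linarith
  have hkeep := sum_sub_card_nsmul_le_sum_filter_le Y d (c := δ / 3) (by positivity)
  rw [nsmul_eq_mul] at hkeep
  rw [card_filter_product_eq_sum, Nat.cast_sum]
  linarith

/-- Let `G` be a simple graph, let `S` and `T` be disjoint finite vertex sets,
let `X ⊆ S` and `Y ⊆ T`, and let `δ > 0` be real. Suppose every `y ∈ Y` satisfies
`d_S(y) ≥ δ`, and suppose `e(X,Y) < δ|Y|/2`. Let `Y'' = {y ∈ Y : d_{S∖X}(y) ≥ δ/3}`. Then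
`e(Y'', S∖X) ≥ δ|Y|/6`. -/
theorem stmt6 {V : Type*} [Fintype V] [DecidableEq V]
    (G : SimpleGraph V) [DecidableRel G.Adj]
    (S T : Finset V) (hdisj : Disjoint S T)
    (X Y : Finset V) (hX : X ⊆ S) (hY : Y ⊆ T)
    (δ : ℝ) (hδ : 0 < δ)
    (hdeg : ∀ y ∈ Y, δ ≤ ((S.filter (fun s => G.Adj y s)).card : ℝ))
    (hsparse : (((X ×ˢ Y).filter (fun p => G.Adj p.1 p.2)).card : ℝ) < δ * Y.card / 2) :
    δ * Y.card / 6 ≤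
      ((((Y.filter (fun y => δ / 3 ≤ (((S \ X).filter (fun s => G.Adj y s)).card : ℝ)))
            ×ˢ (S \ X)).filter (fun p => G.Adj p.1 p.2)).card : ℝ) :=
  stmt6_general G S X Y hX δ hδ hdeg hsparse
end

section
/- Let G be a simple graph, let S and T be disjoint finite vertex sets, let X ⊆ S and Y ⊆ T, and let ñ, δ, m be positive reals. Suppose: (i) every u ∈ T∖Y satisfies |N_Y(N_S(u))| < ñ; (ii) every y ∈ Y satisfies d_S(y) ≤ 5δ; and (iii) every y in Y'' = {y ∈ Y : d_{S∖X}(y) ≥ δ/3} satisfies |N_T(N_S(y)∖X) ∖ Y| ≥ m. Then e(Y'', S∖X) ≤ |T∖Y| · 5δ · ñ / m. -/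
open Finset

/-! Double count the pairs `(y, u) ∈ Y'' × (T ∖ Y)` such that `u` is adjacent to a neighbour of `y`
in `S ∖ X`: each `y ∈ Y''` lies in at least `m` of them by (iii), each `u` in fewer than `ñ` by (i),
so `|Y''| ≤ |T ∖ Y| ñ / m`. By (ii) every `y ∈ Y''` sends at most `5δ` edges to `S ∖ X`. -/

namespace Finset

variable {α β R : Type*} (r : α → β → Prop) [∀ a b, Decidable (r a b)] (s : Finset α) (t : Finset β)

theorem card_filter_product_eq_sum_card_bipartiteAbove :
    #{p ∈ s ×ˢ t | r p.1 p.2} = ∑ a ∈ s, #(t.bipartiteAbove r a) := by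
  simp only [card_filter, sum_product, bipartiteAbove]

theorem card_filter_product_le_card_mul [Semiring R] [PartialOrder R] [IsOrderedRing R] {n : R}
    (hn : ∀ a ∈ s, (#(t.bipartiteAbove r a) : R) ≤ n) :
    (#{p ∈ s ×ˢ t | r p.1 p.2} : R) ≤ #s * n := by
  rw [card_filter_product_eq_sum_card_bipartiteAbove, Nat.cast_sum, ← nsmul_eq_mul]
  exact sum_le_card_nsmul _ _ _ hn

end Finset

namespace SimpleGraph

variable {V : Type*} (G : SimpleGraph V)

def AdjVia (S : Finset V) (y u : V) : Prop := ∃ s ∈ S, G.Adj y s ∧ G.Adj s u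

instance [DecidableRel G.Adj] (S : Finset V) : DecidableRel (G.AdjVia S) :=
  fun _ _ => by unfold AdjVia; infer_instance

end SimpleGraph

theorem stmt8_general {V : Type*} [DecidableEq V]
    (G : SimpleGraph V) [DecidableRel G.Adj]
    (S T : Finset V)
    (X Y : Finset V)
    (nh δ m : ℝ) (hδ : 0 < δ) (hm : 0 < m)
    (h₁ : ∀ u ∈ T \ Y,
      ((Y.filter (fun y => ∃ s ∈ S.filter (fun s => G.Adj u s), G.Adj s y)).card : ℝ) < nh)
    (h₂ : ∀ y ∈ Y, ((S.filter (fun s => G.Adj y s)).card : ℝ) ≤ 5 * δ)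
    (h₃ : ∀ y ∈ Y.filter (fun y => δ / 3 ≤ (((S \ X).filter (fun s => G.Adj y s)).card : ℝ)),
      m ≤ (((T.filter (fun u => ∃ s ∈ (S.filter (fun s => G.Adj y s)) \ X, G.Adj s u))
              \ Y).card : ℝ)) :
    ((((Y.filter (fun y => δ / 3 ≤ (((S \ X).filter (fun s => G.Adj y s)).card : ℝ)))
          ×ˢ (S \ X)).filter (fun p => G.Adj p.1 p.2)).card : ℝ)
      ≤ ((T \ Y).card : ℝ) * (5 * δ) * nh / m := by
  set Y'' := Y.filter (fun y => δ / 3 ≤ (((S \ X).filter (fun s => G.Adj y s)).card : ℝ))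
  have hY'' : Y'' ⊆ Y := filter_subset _ _
  have hcount : #Y'' • m ≤ #(T \ Y) • nh := by
    refine card_nsmul_le_card_nsmul (G.AdjVia (S \ X)) (fun y hy => (h₃ y hy).trans ?_)
      (fun u hu => le_of_lt <| lt_of_le_of_lt ?_ (h₁ u hu))
    · refine Nat.cast_le.2 (card_le_card fun u hu => ?_)
      simp only [mem_sdiff, mem_filter] at hu
      obtain ⟨⟨huT, s, ⟨⟨hsS, hys⟩, hsX⟩, hsu⟩, huY⟩ := hu
      exact (mem_bipartiteAbove _).2 ⟨mem_sdiff.2 ⟨huT, huY⟩, s, mem_sdiff.2 ⟨hsS, hsX⟩, hys, hsu⟩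
    · refine Nat.cast_le.2 (card_le_card fun y hy => ?_)
      obtain ⟨hy, s, hs, hys, hsu⟩ := (mem_bipartiteBelow _).1 hy
      exact mem_filter.2 ⟨hY'' hy, s, mem_filter.2 ⟨(mem_sdiff.1 hs).1, hsu.symm⟩, hys.symm⟩
  have hedges : (#{p ∈ Y'' ×ˢ (S \ X) | G.Adj p.1 p.2} : ℝ) ≤ #Y'' * (5 * δ) :=
    card_filter_product_le_card_mul _ _ _ fun y hy => le_trans
      (Nat.cast_le.2 (card_le_card (filter_subset_filter _ sdiff_subset))) (h₂ y (hY'' hy))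
  rw [nsmul_eq_mul, nsmul_eq_mul, ← le_div_iff₀ hm] at hcount
  calc _ ≤ (#Y'' : ℝ) * (5 * δ) := hedges
    _ ≤ #(T \ Y) * nh / m * (5 * δ) := by gcongr
    _ = _ := by ring

/-- Let `G` be a simple graph, `S` and `T` disjoint finite vertex sets,
`X ⊆ S`, `Y ⊆ T`, `nh, δ, m` positive reals. Suppose:
(i) every `u ∈ T∖Y` satisfies `|N_Y(N_S(u))| < nh`;
(ii) every `y ∈ Y` satisfies `d_S(y) ≤ 5δ`; and
(iii) every `y` in `Y'' = {y ∈ Y : d_{S∖X}(y) ≥ δ/3}` satisfies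
`|N_T(N_S(y)∖X) ∖ Y| ≥ m`. Then `e(Y'', S∖X) ≤ |T∖Y| · 5δ · nh / m`. -/
theorem stmt8 {V : Type*} [Fintype V] [DecidableEq V]
    (G : SimpleGraph V) [DecidableRel G.Adj]
    (S T : Finset V) (hdisj : Disjoint S T)
    (X Y : Finset V) (hX : X ⊆ S) (hY : Y ⊆ T)
    (nh δ m : ℝ) (hnh : 0 < nh) (hδ : 0 < δ) (hm : 0 < m)
    (h₁ : ∀ u ∈ T \ Y,
      ((Y.filter (fun y => ∃ s ∈ S.filter (fun s => G.Adj u s), G.Adj s y)).card : ℝ) < nh)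
    (h₂ : ∀ y ∈ Y, ((S.filter (fun s => G.Adj y s)).card : ℝ) ≤ 5 * δ)
    (h₃ : ∀ y ∈ Y.filter (fun y => δ / 3 ≤ (((S \ X).filter (fun s => G.Adj y s)).card : ℝ)),
      m ≤ (((T.filter (fun u => ∃ s ∈ (S.filter (fun s => G.Adj y s)) \ X, G.Adj s u))
              \ Y).card : ℝ)) :
    ((((Y.filter (fun y => δ / 3 ≤ (((S \ X).filter (fun s => G.Adj y s)).card : ℝ)))
          ×ˢ (S \ X)).filter (fun p => G.Adj p.1 p.2)).card : ℝ)
      ≤ ((T \ Y).card : ℝ) * (5 * δ) * nh / m :=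
  stmt8_general G S T X Y nh δ m hδ hm h₁ h₂ h₃
end

section
/- Let G be a simple graph, let S and T be disjoint finite vertex sets, let X ⊆ S and Y ⊆ T with Y nonempty, and let ñ, δ, m be positive reals. Suppose: (i) every y ∈ Y satisfies δ ≤ d_S(y) ≤ 5δ; (ii) e(X,Y) < δ|Y|/2; (iii) every u ∈ T∖Y satisfies |N_Y(N_S(u))| < ñ; (iv) every y in Y'' = {y ∈ Y : d_{S∖X}(y) ≥ δ/3} satisfies |N_T(N_S(y)∖X) ∖ Y| ≥ m; and (v) m ≤ |Y|. Then m ≤ √(30 · ñ · |T|). -/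
/-!
Vertices of `Y` with fewer than `δ/3` neighbours in `S \ X` have more than `2δ/3` neighbours
in `X`, so the sparsity of `e(X, Y)` forces at least a quarter of `Y` into `Y''`. Double
counting the paths `y - s - u` with `y ∈ Y''`, `s ∈ S \ X`, `u ∈ T \ Y` gives
`m |Y''| ≤ ñ |T|`, hence `m² ≤ m |Y| ≤ 4 m |Y''| ≤ 4 ñ |T|`.
-/

open Finset

namespace SimpleGraph

variable {V : Type*} (G : SimpleGraph V) [DecidableRel G.Adj]

lemma card_filter_adj_product_eq_sum (X Y : Finset V) :
    #{p ∈ X ×ˢ Y | G.Adj p.1 p.2} = ∑ y ∈ Y, #{x ∈ X | G.Adj y x} := by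
  rw [card_filter, sum_product, sum_comm]
  refine sum_congr rfl fun y _ => ?_
  rw [card_filter]
  exact sum_congr rfl fun x _ => if_congr (G.adj_comm x y) rfl rfl

variable [DecidableEq V]

lemma card_filter_adj_sdiff_add {S X : Finset V} (hX : X ⊆ S) (y : V) :
    #{s ∈ S \ X | G.Adj y s} + #{s ∈ X | G.Adj y s} = #{s ∈ S | G.Adj y s} := by
  have hfilter : {s ∈ S \ X | G.Adj y s} = {s ∈ S | G.Adj y s} \ {s ∈ X | G.Adj y s} := by
    ext s; simp only [mem_filter, mem_sdiff]; tauto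
  rw [hfilter]
  exact card_sdiff_add_card_eq_card (filter_subset_filter _ hX)

lemma card_lt_four_mul_card_filter_le_card_filter_adj_sdiff {S X Y : Finset V} {δ : ℝ}
    (hX : X ⊆ S) (hδ : 0 < δ) (hdeg : ∀ y ∈ Y, δ ≤ #{s ∈ S | G.Adj y s})
    (hsparse : #{p ∈ X ×ˢ Y | G.Adj p.1 p.2} < δ * #Y / 2) :
    (#Y : ℝ) < 4 * #{y ∈ Y | δ / 3 ≤ (#{s ∈ S \ X | G.Adj y s} : ℝ)} := by
  set Y'' := {y ∈ Y | δ / 3 ≤ (#{s ∈ S \ X | G.Adj y s} : ℝ)}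
  have hdegX : ∀ y ∈ Y \ Y'', 2 * δ / 3 ≤ (#{x ∈ X | G.Adj y x} : ℝ) := by
    intro y hy
    obtain ⟨hyY, hyY''⟩ := mem_sdiff.mp hy
    have hfew : (#{s ∈ S \ X | G.Adj y s} : ℝ) < δ / 3 :=
      not_le.mp fun h => hyY'' (mem_filter.mpr ⟨hyY, h⟩)
    have hsplit := congrArg (Nat.cast : ℕ → ℝ) (G.card_filter_adj_sdiff_add hX y)
    push_cast at hsplit
    linarith [hdeg y hyY]
  have hmass : #(Y \ Y'') • (2 * δ / 3) ≤ (#{p ∈ X ×ˢ Y | G.Adj p.1 p.2} : ℝ) :=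
    calc #(Y \ Y'') • (2 * δ / 3)
        ≤ ∑ y ∈ Y \ Y'', (#{x ∈ X | G.Adj y x} : ℝ) := card_nsmul_le_sum _ _ _ hdegX
      _ ≤ ∑ y ∈ Y, (#{x ∈ X | G.Adj y x} : ℝ) :=
          sum_le_sum_of_subset_of_nonneg sdiff_subset fun _ _ _ => Nat.cast_nonneg _
      _ = #{p ∈ X ×ˢ Y | G.Adj p.1 p.2} := by
          rw [G.card_filter_adj_product_eq_sum]; push_cast; rfl
  have hY'' : Y'' ⊆ Y := filter_subset _ _
  rw [nsmul_eq_mul, card_sdiff_of_subset hY'', Nat.cast_sub (card_le_card hY'')] at hmass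
  nlinarith

lemma card_mul_le_card_sdiff_mul {S T X Y Z : Finset V} {m n : ℝ} (hZ : Z ⊆ Y)
    (hout : ∀ y ∈ Z, m ≤ (#({u ∈ T | ∃ s ∈ {s ∈ S | G.Adj y s} \ X, G.Adj s u} \ Y) : ℝ))
    (hin : ∀ u ∈ T \ Y, (#{y ∈ Y | ∃ s ∈ {s ∈ S | G.Adj u s}, G.Adj s y} : ℝ) ≤ n) :
    #Z * m ≤ #(T \ Y) * n := by
  rw [← nsmul_eq_mul, ← nsmul_eq_mul]
  refine card_nsmul_le_card_nsmul
    (fun y u => ∃ s ∈ {s ∈ S | G.Adj y s} \ X, G.Adj s u) (fun y hy => ?_) (fun u hu => ?_)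
  · refine (hout y hy).trans_eq (congrArg _ (congrArg _ ?_))
    ext u
    simp only [bipartiteAbove, mem_filter, mem_sdiff]
    tauto
  · refine le_trans (Nat.cast_le.mpr (card_le_card fun y hy => ?_)) (hin u hu)
    simp only [bipartiteBelow, mem_filter, mem_sdiff] at hy ⊢
    obtain ⟨hyZ, s, ⟨⟨hsS, hys⟩, -⟩, hsu⟩ := hy
    exact ⟨hZ hyZ, s, ⟨hsS, hsu.symm⟩, hys.symm⟩

end SimpleGraph

theorem stmt9_general {V : Type*} [DecidableEq V]
    (G : SimpleGraph V) [DecidableRel G.Adj]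
    (S T : Finset V)
    (X Y : Finset V) (hX : X ⊆ S)
    (nh δ m : ℝ) (hnh : 0 < nh) (hδ : 0 < δ) (hm : 0 < m)
    (h₁ : ∀ y ∈ Y, δ ≤ ((S.filter (fun s => G.Adj y s)).card : ℝ) ∧
                   ((S.filter (fun s => G.Adj y s)).card : ℝ) ≤ 5 * δ)
    (h₂ : (((X ×ˢ Y).filter (fun p => G.Adj p.1 p.2)).card : ℝ) < δ * Y.card / 2)
    (h₃ : ∀ u ∈ T \ Y,
      ((Y.filter (fun y => ∃ s ∈ S.filter (fun s => G.Adj u s), G.Adj s y)).card : ℝ) < nh)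
    (h₄ : ∀ y ∈ Y.filter (fun y => δ / 3 ≤ (((S \ X).filter (fun s => G.Adj y s)).card : ℝ)),
      m ≤ (((T.filter (fun u => ∃ s ∈ (S.filter (fun s => G.Adj y s)) \ X, G.Adj s u))
              \ Y).card : ℝ))
    (h₅ : m ≤ (Y.card : ℝ)) :
    m ≤ Real.sqrt (30 * nh * T.card) := by
  set Y'' := Y.filter (fun y => δ / 3 ≤ (((S \ X).filter (fun s => G.Adj y s)).card : ℝ))
  have hquarter : (#Y : ℝ) < 4 * #Y'' :=
    G.card_lt_four_mul_card_filter_le_card_filter_adj_sdiff hX hδ (fun y hy => (h₁ y hy).1) h₂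
  have hcount : #Y'' * m ≤ #(T \ Y) * nh :=
    G.card_mul_le_card_sdiff_mul (filter_subset _ _) h₄ fun u hu => (h₃ u hu).le
  have hTY : (#(T \ Y) : ℝ) ≤ #T := Nat.cast_le.mpr (card_le_card sdiff_subset)
  refine Real.le_sqrt_of_sq_le ?_
  calc m ^ 2 = m * m := sq m
    _ ≤ m * (4 * #Y'') := by gcongr; exact h₅.trans hquarter.le
    _ = 4 * (#Y'' * m) := by ring
    _ ≤ 4 * (#(T \ Y) * nh) := by gcongr
    _ ≤ 4 * (#T * nh) := by gcongr
    _ ≤ 30 * nh * #T := by nlinarith [mul_nonneg hnh.le (Nat.cast_nonneg (α := ℝ) #T)]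

/-- key bound `|Y_j| ≤ √(30 ñ |T_j|)`. Let `G` be a simple graph, `S` and
`T` disjoint finite vertex sets, `X ⊆ S`, `Y ⊆ T` with `Y` nonempty, and `nh, δ, m` positive
reals. Suppose:
(i) every `y ∈ Y` satisfies `δ ≤ d_S(y) ≤ 5δ`;
(ii) `e(X,Y) < δ|Y|/2`;
(iii) every `u ∈ T∖Y` satisfies `|N_Y(N_S(u))| < nh`;
(iv) every `y ∈ Y'' = {y ∈ Y : d_{S∖X}(y) ≥ δ/3}` satisfies `|N_T(N_S(y)∖X) ∖ Y| ≥ m`; and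
(v) `m ≤ |Y|`. Then `m ≤ √(30 · nh · |T|)`. -/
theorem stmt9 {V : Type*} [Fintype V] [DecidableEq V]
    (G : SimpleGraph V) [DecidableRel G.Adj]
    (S T : Finset V) (hdisj : Disjoint S T)
    (X Y : Finset V) (hX : X ⊆ S) (hY : Y ⊆ T) (hYne : Y.Nonempty)
    (nh δ m : ℝ) (hnh : 0 < nh) (hδ : 0 < δ) (hm : 0 < m)
    (h₁ : ∀ y ∈ Y, δ ≤ ((S.filter (fun s => G.Adj y s)).card : ℝ) ∧
                   ((S.filter (fun s => G.Adj y s)).card : ℝ) ≤ 5 * δ)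
    (h₂ : (((X ×ˢ Y).filter (fun p => G.Adj p.1 p.2)).card : ℝ) < δ * Y.card / 2)
    (h₃ : ∀ u ∈ T \ Y,
      ((Y.filter (fun y => ∃ s ∈ S.filter (fun s => G.Adj u s), G.Adj s y)).card : ℝ) < nh)
    (h₄ : ∀ y ∈ Y.filter (fun y => δ / 3 ≤ (((S \ X).filter (fun s => G.Adj y s)).card : ℝ)),
      m ≤ (((T.filter (fun u => ∃ s ∈ (S.filter (fun s => G.Adj y s)) \ X, G.Adj s u))
              \ Y).card : ℝ))
    (h₅ : m ≤ (Y.card : ℝ)) :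
    m ≤ Real.sqrt (30 * nh * T.card) :=
  stmt9_general G S T X Y hX nh δ m hnh hδ hm h₁ h₂ h₃ h₄ h₅
end
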